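/- For every n ≥ 1, Foata's fundamental transformation is a bijection from the set of permutations of {1,...,n} to itself. -/

import Mathlib

/-!
The word `foataWord π` lists every element exactly once, because the cycles of `π` partition
`Fin n`; so it is the one-line notation of a permutation, which is `foataPerm π`. The word
determines `π`: each cycle starts with its minimum and the minima decrease, so the first cycle
is the longest prefix of entries not smaller than the first entry, and peeling off the cycles
one at a time recovers `π`. Hence the transformation is injective, so bijective on the finite
set of permutations.
-/

open Classical in
/-- The one-line word of Foata's fundamental transformation: write each cycle of `π`
with its smallest element first, sort the cycles in descending order of their first
elements, and erase the parentheses. -/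
noncomputable def foataWord {n : ℕ} (π : Equiv.Perm (Fin n)) : List (Fin n) :=
  (((List.finRange n).filter (fun m => decide (∀ k : ℕ, m ≤ (π ^ k) m))).reverse).flatMap
    (fun m => (List.range (Function.minimalPeriod (⇑π) m)).map (fun k => (π ^ k) m))

/-- Foata's fundamental transformation as a map on permutations. -/
noncomputable def foataPerm {n : ℕ} (π : Equiv.Perm (Fin n)) : Equiv.Perm (Fin n) :=
  if h : ∃ σ : Equiv.Perm (Fin n), List.ofFn ⇑σ = foataWord π then h.choose else 1

namespace Foata

open Equiv Function

variable {α : Type*}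

noncomputable def cycleList (π : Perm α) (m : α) : List α :=
  (List.range (minimalPeriod π m)).map fun k => (π ^ k) m

section Cycles

variable (π : Perm α)

theorem pow_mod_minimalPeriod_apply (m : α) (k : ℕ) :
    (π ^ (k % minimalPeriod π m)) m = (π ^ k) m :=
  MulAction.pow_smul_mod_minimalPeriod π m k

@[simp]
theorem length_cycleList (m : α) : (cycleList π m).length = minimalPeriod π m := by
  simp [cycleList]

theorem nodup_cycleList (m : α) : (cycleList π m).Nodup :=
  List.nodup_range.map_on fun _ ha _ hb hab =>
    iterate_injOn_Iio_minimalPeriod (List.mem_range.mp ha) (List.mem_range.mp hb)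
      (by simpa only [Perm.iterate_eq_pow] using hab)

theorem apply_getElem_cycleList (m : α) (i : ℕ) (hi : i < (cycleList π m).length) :
    π (cycleList π m)[i] =
      (cycleList π m)[(i + 1) % (cycleList π m).length]'(Nat.mod_lt _ (by omega)) := by
  simp [cycleList, pow_mod_minimalPeriod_apply, pow_succ', Perm.mul_apply]

theorem eqOn_of_cycleList_eq {π π' : Perm α} {m : α} (h : cycleList π m = cycleList π' m) :
    ∀ x ∈ cycleList π m, π x = π' x := by
  intro x hx
  obtain ⟨i, hi, rfl⟩ := List.getElem_of_mem hx
  have h' := apply_getElem_cycleList π' m i (h ▸ hi)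
  simp only [← h] at h'
  rw [apply_getElem_cycleList, h']

variable [Finite α]

theorem minimalPeriod_pos (x : α) : 0 < minimalPeriod π x :=
  MulAction.period_pos_of_orderOf_pos (orderOf_pos π) x

theorem head?_cycleList (m : α) : (cycleList π m).head? = some m := by
  obtain ⟨p, hp⟩ := Nat.exists_eq_add_one_of_ne_zero (minimalPeriod_pos π m).ne'
  simp [cycleList, hp, List.range_succ_eq_map]

theorem head?_flatMap_cycleList (S : List α) : (S.flatMap (cycleList π)).head? = S.head? := by
  cases S <;> simp [List.head?_append, head?_cycleList]

theorem mem_cycleList {m x : α} : x ∈ cycleList π m ↔ π.SameCycle m x := by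
  constructor
  · simp only [cycleList, List.mem_map]
    rintro ⟨k, -, rfl⟩
    exact Perm.sameCycle_pow_right.mpr (Perm.SameCycle.refl π m)
  · intro h
    obtain ⟨k, rfl⟩ := h.exists_nat_pow_eq
    exact List.mem_map.mpr ⟨k % minimalPeriod π m,
      List.mem_range.mpr (Nat.mod_lt _ (minimalPeriod_pos π m)),
      pow_mod_minimalPeriod_apply π m k⟩

end Cycles

section CycleMin

variable [LinearOrder α]

def IsCycleMin (π : Perm α) (m : α) : Prop := ∀ k : ℕ, m ≤ (π ^ k) m

variable [Finite α] {π : Perm α} {m m' x : α}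

theorem IsCycleMin.le_of_sameCycle (hm : IsCycleMin π m) (h : π.SameCycle m x) : m ≤ x := by
  obtain ⟨k, rfl⟩ := h.exists_nat_pow_eq
  exact hm k

theorem IsCycleMin.eq_of_sameCycle (hm : IsCycleMin π m) (hm' : IsCycleMin π m')
    (h : π.SameCycle m m') : m = m' :=
  le_antisymm (hm.le_of_sameCycle h) (hm'.le_of_sameCycle h.symm)

variable (π) in
theorem exists_isCycleMin_sameCycle (x : α) : ∃ m, IsCycleMin π m ∧ π.SameCycle m x := by
  obtain ⟨m, hxm, hmin⟩ := Set.exists_min_image {y | π.SameCycle x y} id (Set.toFinite _)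
    ⟨x, Perm.SameCycle.refl π x⟩
  exact ⟨m, fun k => hmin _ (Perm.sameCycle_pow_right.mpr hxm), hxm.symm⟩

theorem disjoint_cycleList (hm : IsCycleMin π m) (hm' : IsCycleMin π m') (hne : m ≠ m') :
    (cycleList π m).Disjoint (cycleList π m') := by
  intro x hx hx'
  exact hne (hm.eq_of_sameCycle hm'
    (((mem_cycleList π).mp hx).trans ((mem_cycleList π).mp hx').symm))

theorem takeWhile_flatMap_cycleList_cons {S : List α} (hm : IsCycleMin π m)
    (hS : ∀ m' ∈ S, m' < m) :
    ((m :: S).flatMap (cycleList π)).takeWhile (fun x => decide (m ≤ x)) = cycleList π m := by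
  rw [List.flatMap_cons, List.takeWhile_append_of_pos
    fun x hx => decide_eq_true (hm.le_of_sameCycle ((mem_cycleList π).mp hx))]
  cases S with
  | nil => simp
  | cons m₂ S =>
    obtain ⟨w, hw⟩ : ∃ w, (m₂ :: S).flatMap (cycleList π) = m₂ :: w :=
      List.head?_eq_some_iff.mp (head?_flatMap_cycleList π _)
    simp [hw, hS m₂ List.mem_cons_self]

theorem eqOn_of_flatMap_cycleList_eq {π π' : Perm α} {S S' : List α}
    (hS : ∀ m ∈ S, IsCycleMin π m) (hS' : ∀ m ∈ S', IsCycleMin π' m)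
    (hSd : S.Pairwise (· > ·)) (hSd' : S'.Pairwise (· > ·))
    (h : S.flatMap (cycleList π) = S'.flatMap (cycleList π')) :
    ∀ x ∈ S.flatMap (cycleList π), π x = π' x := by
  induction S generalizing S' with
  | nil => simp
  | cons m T ih =>
    have hhead := congrArg List.head? h
    rw [head?_flatMap_cycleList, head?_flatMap_cycleList] at hhead
    obtain ⟨T', rfl⟩ : ∃ T', S' = m :: T' := by
      cases S' with
      | nil => simp at hhead
      | cons m' T' => exact ⟨T', by simpa using hhead.symm⟩
    have hblock : cycleList π m = cycleList π' m := by
      rw [← takeWhile_flatMap_cycleList_cons (hS m List.mem_cons_self)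
          (fun _ => List.rel_of_pairwise_cons hSd), h,
        takeWhile_flatMap_cycleList_cons (hS' m List.mem_cons_self)
          (fun _ => List.rel_of_pairwise_cons hSd')]
    have htail : T.flatMap (cycleList π) = T'.flatMap (cycleList π') := by
      simpa only [List.flatMap_cons, hblock, List.append_cancel_left_eq] using h
    intro x hx
    rw [List.flatMap_cons, List.mem_append] at hx
    rcases hx with hx | hx
    · exact eqOn_of_cycleList_eq hblock x hx
    · exact ih (fun a ha => hS a (List.mem_cons_of_mem _ ha))
        (fun a ha => hS' a (List.mem_cons_of_mem _ ha)) hSd.of_cons hSd'.of_cons htail x hx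

end CycleMin

section Word

variable {n : ℕ}

open Classical in
noncomputable def cycleMins (π : Perm (Fin n)) : List (Fin n) :=
  ((List.finRange n).filter fun m => decide (IsCycleMin π m)).reverse

theorem foataWord_eq_flatMap (π : Perm (Fin n)) :
    foataWord π = (cycleMins π).flatMap (cycleList π) :=
  rfl

theorem mem_cycleMins {π : Perm (Fin n)} {m : Fin n} : m ∈ cycleMins π ↔ IsCycleMin π m := by
  simp [cycleMins]

theorem pairwise_cycleMins (π : Perm (Fin n)) : (cycleMins π).Pairwise (· > ·) := by
  simpa [cycleMins, List.pairwise_reverse] using (List.pairwise_lt_finRange n).filter _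

theorem mem_foataWord (π : Perm (Fin n)) (x : Fin n) : x ∈ foataWord π := by
  obtain ⟨m, hm, hmx⟩ := exists_isCycleMin_sameCycle π x
  rw [foataWord_eq_flatMap]
  exact List.mem_flatMap.mpr ⟨m, mem_cycleMins.mpr hm, (mem_cycleList π).mpr hmx⟩

theorem nodup_foataWord (π : Perm (Fin n)) : (foataWord π).Nodup := by
  rw [foataWord_eq_flatMap]
  refine List.nodup_flatMap.mpr ⟨fun m _ => nodup_cycleList π m, ?_⟩
  exact (pairwise_cycleMins π).imp_of_mem fun ha hb hab =>
    disjoint_cycleList (mem_cycleMins.mp ha) (mem_cycleMins.mp hb) hab.ne'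

theorem foataWord_injective : Injective (foataWord (n := n)) := fun π π' h =>
  Equiv.ext fun x =>
    eqOn_of_flatMap_cycleList_eq (fun _ => mem_cycleMins.mp) (fun _ => mem_cycleMins.mp)
      (pairwise_cycleMins π) (pairwise_cycleMins π') h x (mem_foataWord π x)

theorem exists_ofFn_eq_of_nodup {l : List (Fin n)} (hnd : l.Nodup) (hl : ∀ x, x ∈ l) :
    ∃ σ : Perm (Fin n), List.ofFn σ = l := by
  have hlen : l.length = n := by simpa using Fintype.card_congr (hnd.getEquivOfForallMemList l hl)
  refine ⟨(finCongr hlen.symm).trans (hnd.getEquivOfForallMemList l hl), ?_⟩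
  exact List.ext_get (by simp [hlen]) fun _ _ _ => by simp

theorem ofFn_foataPerm (π : Perm (Fin n)) : List.ofFn (foataPerm π) = foataWord π := by
  have h := exists_ofFn_eq_of_nodup (nodup_foataWord π) (mem_foataWord π)
  rw [foataPerm, dif_pos h]
  exact h.choose_spec

theorem foataPerm_injective : Injective (foataPerm (n := n)) := fun π π' h =>
  foataWord_injective (by rw [← ofFn_foataPerm, h, ofFn_foataPerm])

end Word

end Foata

theorem foata_bijective_general (n : ℕ) :
    Function.Bijective (foataPerm (n := n)) :=
  Foata.foataPerm_injective.bijective_of_finite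

/-- For every `n ≥ 1`, Foata's fundamental transformation is a bijection on the set of
permutations of `{1,…,n}`. -/
theorem foata_bijective (n : ℕ) (hn : 1 ≤ n) :
    Function.Bijective (foataPerm (n := n)) :=
  foata_bijective_general n
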